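/- arXiv:1401.5709 — 3 statements merged into one kernel-verified Lean document; each statement's English description precedes it below -/
import Mathlib

section
/- Let r ≥ 2, s ≥ 3, and n, m ≥ 1. For every m̂ ≥ 2 and every partition m = m₁ + ⋯ + m_{m̂} into positive parts, there exist nonnegative integers n̂, ň₁, …, ň_{m̂} with n = n̂ + ň₁ + ⋯ + ň_{m̂} such that: if m̂ = 2 then PERM_{r,s}(n,m) ≤ PERM_{r,s}(ň₁,m₁) + PERM_{r,s}(ň₂,m₂) + PERM_{r,s−1}(2n̂, m), and if m̂ > 2 then PERM_{r,s}(n,m) ≤ Σ_{q=1}^{m̂} PERM_{r,s}(ňq, mq) + 2·PERM_{r,s−1}(n̂, m) + PERM_{r,s−2}(PERM_{r,s}(n̂, m̂) − 2n̂, m). -/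
/-! ## Basic definitions for generalized Davenport-Schinzel sequences -/

/-- `σ` is contained in `S`: `S` has a subsequence equal to `σ`
after an injective renaming of symbols. -/
def SeqContains (σ S : List ℕ) : Prop :=
  ∃ f : ℕ → ℕ, (∀ a ∈ σ, ∀ b ∈ σ, f a = f b → a = b) ∧ (σ.map f).Sublist S

/-- `S` avoids every member of the family `P`. -/
def FamFree (P : Set (List ℕ)) (S : List ℕ) : Prop := ∀ σ ∈ P, ¬ SeqContains σ S

/-- `S` is `k`-sparse: equal entries are at least `k` positions apart. -/
def Sparse (k : ℕ) (S : List ℕ) : Prop :=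
  ∀ i j : Fin S.length, (i : ℕ) < (j : ℕ) → S.get i = S.get j → (i : ℕ) + k ≤ (j : ℕ)

/-- `S` is a concatenation of at most `m` blocks (sequences of distinct symbols). -/
def BlockPartition (S : List ℕ) (m : ℕ) : Prop :=
  ∃ Bs : List (List ℕ), Bs.length ≤ m ∧ (∀ B ∈ Bs, B.Nodup) ∧ S = Bs.flatten

/-- `Ex(P, n)` for `r`-sparse sequences: maximum length of an `r`-sparse `P`-free sequence
over an alphabet of at most `n` symbols. -/
noncomputable def ExS (P : Set (List ℕ)) (r n : ℕ) : ℕ :=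
  sSup {L : ℕ | ∃ S : List ℕ, FamFree P S ∧ S.toFinset.card ≤ n ∧ Sparse r S ∧ S.length = L}

/-- `Ex(P, n, m)`: maximum length of a `P`-free sequence over an alphabet of at most `n`
symbols partitioned into at most `m` blocks. -/
noncomputable def ExB (P : Set (List ℕ)) (n m : ℕ) : ℕ :=
  sSup {L : ℕ | ∃ S : List ℕ, FamFree P S ∧ S.toFinset.card ≤ n ∧ BlockPartition S m ∧ S.length = L}

/-- `Ex(σ, n)` for a single forbidden sequence `σ`, with the `‖σ‖`-sparseness convention. -/
noncomputable def ExSeq (σ : List ℕ) (n : ℕ) : ℕ := ExS {σ} σ.toFinset.card n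

/-- `Ex(σ, n, m)` for a single forbidden sequence `σ`. -/
noncomputable def ExSeqB (σ : List ℕ) (n m : ℕ) : ℕ := ExB {σ} n m

/-- `B` is a permutation of `{1, …, r}` listed as a sequence. -/
def IsPermBlock (r : ℕ) (B : List ℕ) : Prop :=
  B.Nodup ∧ B.toFinset = Finset.Icc 1 r

/-- `B` contains exactly two occurrences of each symbol of `{1, …, r}` and nothing else. -/
def IsDoubleBlock (r : ℕ) (B : List ℕ) : Prop :=
  ∀ a : ℕ, B.count a = if a ∈ Finset.Icc 1 r then 2 else 0

/-- `Perm_{r,k}`: all concatenations of `k` permutations of `{1, …, r}`. -/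
def PermFam (r k : ℕ) : Set (List ℕ) :=
  {S | ∃ Bs : List (List ℕ), Bs.length = k ∧ (∀ B ∈ Bs, IsPermBlock r B) ∧ S = Bs.flatten}

/-- `dblPerm_{r,k}`: sequences `σ₁σ₂⋯σ_k` over `{1, …, r}` where `σ₁, σ_k` are permutations
of `{1, …, r}` and `σ₂, …, σ_{k-1}` contain exactly two occurrences of every symbol. -/
def DblPermFam (r k : ℕ) : Set (List ℕ) :=
  {S | ∃ (F L : List ℕ) (Ms : List (List ℕ)),
      IsPermBlock r F ∧ IsPermBlock r L ∧ Ms.length = k - 2 ∧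
      (∀ B ∈ Ms, IsDoubleBlock r B) ∧ S = F ++ Ms.flatten ++ L}

/-- Doubling of the inner part: every entry doubled except the last. -/
def dblMid : List ℕ → List ℕ
  | [] => []
  | [a] => [a]
  | a :: b :: rest => a :: a :: dblMid (b :: rest)

/-- `dbl σ`: double every occurrence of `σ` except the first and the last. -/
def dbl : List ℕ → List ℕ
  | [] => []
  | a :: rest => a :: dblMid rest

/-- The alternating sequence `1 2 1 2 ⋯` of length `L`. -/
def altSeq (L : ℕ) : List ℕ := (List.range L).map (fun i => i % 2 + 1)

/-- `upSeq a b = a (a+1) ⋯ b`. -/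
def upSeq (a b : ℕ) : List ℕ := List.range' a (b + 1 - a)

/-- `downSeq a b = b (b-1) ⋯ a`. -/
def downSeq (a b : ℕ) : List ℕ := (List.range' a (b + 1 - a)).reverse

/-- The M-shaped sequence `M_k = 1⋯(k+1) k⋯1 2⋯(k+1) k⋯1`. -/
def Mseq (k : ℕ) : List ℕ := upSeq 1 (k+1) ++ downSeq 1 k ++ upSeq 2 (k+1) ++ downSeq 1 k

/-- The zig-zag sequence `Z_k = 1⋯(k+1) k⋯1 2⋯(k+1) k⋯1 2⋯(k+1)`. -/
def Zseq (k : ℕ) : List ℕ :=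
  upSeq 1 (k+1) ++ downSeq 1 k ++ upSeq 2 (k+1) ++ downSeq 1 k ++ upSeq 2 (k+1)

/-- The one-sided comb `C_k = 1 2 ⋯ (k+2) 1 (k+2) 2 (k+2) ⋯ (k+1) (k+2)`. -/
def Cseq (k : ℕ) : List ℕ :=
  upSeq 1 (k+2) ++ (List.range' 1 (k+1)).flatMap (fun a => [a, k+2])

/-- Order-`s` Davenport-Schinzel extremal function `DS_s(n)`. -/
noncomputable def DS (s n : ℕ) : ℕ := ExSeq (altSeq (s+2)) n

/-- Blocked version `DS_s(n,m)`. -/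
noncomputable def DSB (s n m : ℕ) : ℕ := ExSeqB (altSeq (s+2)) n m

/-- Order-`s` double DS extremal function `dblDS_s(n)`. -/
noncomputable def dblDS (s n : ℕ) : ℕ := ExSeq (dbl (altSeq (s+2))) n

/-- Blocked version `dblDS_s(n,m)`. -/
noncomputable def dblDSB (s n m : ℕ) : ℕ := ExSeqB (dbl (altSeq (s+2))) n m

/-- `PERM_{r,s}(n) = Ex(Perm_{r,s+1}, n)`. -/
noncomputable def PERM (r s n : ℕ) : ℕ := ExS (PermFam r (s+1)) r n

/-- `PERM_{r,s}(n,m) = Ex(Perm_{r,s+1}, n, m)`. -/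
noncomputable def PERMB (r s n m : ℕ) : ℕ := ExB (PermFam r (s+1)) n m

/-- `dblPERM_{r,s}(n) = Ex(dblPerm_{r,s+1}, n)`. -/
noncomputable def dblPERM (r s n : ℕ) : ℕ := ExS (DblPermFam r (s+1)) r n

/-- `dblPERM_{r,s}(n,m) = Ex(dblPerm_{r,s+1}, n, m)`. -/
noncomputable def dblPERMB (r s n m : ℕ) : ℕ := ExB (DblPermFam r (s+1)) n m

/-- Ackermann's function `a_{i,j}`: `a_{1,j} = 2^j`, `a_{i,1} = 2` for `i ≥ 2`, and
`a_{i,j} = w ⬝ a_{i-1,w}` with `w = a_{i,j-1}` for `i, j ≥ 2`. -/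
def ackF : ℕ → ℕ → ℕ
  | 0, _ => 0
  | 1, j => 2 ^ j
  | _+2, 0 => 2
  | _+2, 1 => 2
  | i+2, j+2 => ackF (i+2) (j+1) * ackF (i+1) (ackF (i+2) (j+1))
  termination_by i j => (i, j)

/-- The inverse Ackermann function `α(n,m) = min {i ≥ 1 : a_{i,j} ≥ m}`
where `j = max(⌈n/m⌉, 3)`. -/
noncomputable def alphaAck (n m : ℕ) : ℕ :=
  sInf {i : ℕ | 1 ≤ i ∧ m ≤ ackF i (max ((n + m - 1) / m) 3)}

/-- `α(n) = α(n,n)`. -/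
noncomputable def alphaN (n : ℕ) : ℕ := alphaAck n n


/-!
Take an extremal sequence for `PERMB r s n m` and cut its `m` blocks into `m̂` consecutive
segments of `m_q` blocks. A symbol is global if it occurs in at least two segments and local
otherwise; `n̂` counts the global symbols, and `ň_q` the local symbols of segment `q`, padded so
that the counts add up to `n`.

The occurrences in segment `q` split into four parts. The local ones are `Perm_{r,s+1}`-free on
`ň_q` symbols. If `q` is the first segment of a global symbol, that symbol occurs again after the
segment, so a further permutation can be appended to any pattern found among these occurrences:
they are `Perm_{r,s}`-free. The same holds for last segments, and occurrences in neither the first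
nor the last segment of their symbol are `Perm_{r,s-1}`-free. `PERM` is superadditive in `(n, m)`,
because sequences over disjoint alphabets concatenate without creating a pattern, so each kind of
occurrence is bounded by a single `PERM` over all `m` blocks. A global symbol meets at least two
more segments than it is a middle symbol of, so the middle symbol counts add up to at most
`L - 2 n̂`. Here `L` is the length of the contracted sequence that keeps one occurrence of every
global symbol per segment; it has `m̂` blocks, so `L ≤ PERM_{r,s}(n̂, m̂)`. When `m̂ = 2`, no
occurrence is a middle one, and the first and last occurrences lie in different segments.
-/

section Extremal

variable {P : Set (List ℕ)}

theorem SeqContains.of_sublist {σ T S : List ℕ} (h : SeqContains σ T) (hTS : T.Sublist S) :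
    SeqContains σ S :=
  let ⟨f, hf, hsub⟩ := h
  ⟨f, hf, hsub.trans hTS⟩

theorem FamFree.sublist {S T : List ℕ} (h : FamFree P S) (hTS : T.Sublist S) : FamFree P T :=
  fun σ hσ hc => h σ hσ (hc.of_sublist hTS)

theorem FamFree.map {S : List ℕ} {g : ℕ → ℕ} (hg : g.Injective) (h : FamFree P S) :
    FamFree P (S.map g) := by
  rintro σ hσ ⟨f, hf, hsub⟩
  obtain ⟨l, hl, hfl⟩ := List.sublist_map_iff.1 hsub
  have hg_inv : ∀ c ∈ σ, g (Function.invFun g (f c)) = f c := fun c hc =>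
    have ⟨x, _, hx⟩ := List.mem_map.1 (hfl ▸ List.mem_map_of_mem hc : f c ∈ l.map g)
    Function.invFun_eq ⟨x, hx⟩
  refine h σ hσ ⟨Function.invFun g ∘ f, fun a ha b hb hab => hf a ha b hb ?_, ?_⟩
  · rw [← hg_inv a ha, ← hg_inv b hb]
    exact congrArg g hab
  · rwa [← List.map_map, hfl, List.map_map, (Function.leftInverse_invFun hg).comp_eq_id,
      List.map_id]

theorem BlockPartition.mono {S : List ℕ} {m m' : ℕ} (hS : BlockPartition S m) (hm : m ≤ m') :
    BlockPartition S m' :=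
  let ⟨Bs, hlen, hnd, hBs⟩ := hS
  ⟨Bs, hlen.trans hm, hnd, hBs⟩

theorem BlockPartition.append {S₁ S₂ : List ℕ} {m₁ m₂ : ℕ} (h₁ : BlockPartition S₁ m₁)
    (h₂ : BlockPartition S₂ m₂) : BlockPartition (S₁ ++ S₂) (m₁ + m₂) := by
  obtain ⟨Bs₁, hlen₁, hnd₁, rfl⟩ := h₁
  obtain ⟨Bs₂, hlen₂, hnd₂, rfl⟩ := h₂
  refine ⟨Bs₁ ++ Bs₂, by simp only [List.length_append]; omega, ?_, List.flatten_append.symm⟩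
  simpa only [List.mem_append, or_imp, forall_and] using ⟨hnd₁, hnd₂⟩

theorem BlockPartition.map {S : List ℕ} {m : ℕ} {g : ℕ → ℕ} (hg : g.Injective)
    (hS : BlockPartition S m) : BlockPartition (S.map g) m := by
  obtain ⟨Bs, hlen, hnd, rfl⟩ := hS
  refine ⟨Bs.map (List.map g), by rwa [List.length_map], ?_, List.map_flatten ..⟩
  simpa only [List.mem_map, forall_exists_index, and_imp, forall_apply_eq_imp_iff₂]
    using fun B hB => (hnd B hB).map hg

theorem BlockPartition.length_le {S : List ℕ} {n m : ℕ} (hS : BlockPartition S m)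
    (hn : S.toFinset.card ≤ n) : S.length ≤ n * m := by
  obtain ⟨Bs, hlen, hnd, rfl⟩ := hS
  have hB : ∀ l ∈ Bs.map List.length, l ≤ n := by
    simp only [List.mem_map, forall_exists_index, and_imp, forall_apply_eq_imp_iff₂]
    intro B hB
    rw [← List.toFinset_card_of_nodup (hnd B hB)]
    refine le_trans (Finset.card_le_card fun a ha => ?_) hn
    simp only [List.mem_toFinset, List.mem_flatten] at ha ⊢
    exact ⟨B, hB, ha⟩
  calc Bs.flatten.length = (Bs.map List.length).sum := List.length_flatten
    _ ≤ Bs.length * n := by simpa using List.sum_le_card_nsmul _ _ hB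
    _ ≤ n * m := by rw [mul_comm]; exact Nat.mul_le_mul_left n hlen

theorem bddAbove_ExB (P : Set (List ℕ)) (n m : ℕ) : BddAbove
    {L : ℕ | ∃ S : List ℕ, FamFree P S ∧ S.toFinset.card ≤ n ∧ BlockPartition S m ∧ S.length = L} :=
  ⟨n * m, by rintro _ ⟨S, -, hn, hS, rfl⟩; exact hS.length_le hn⟩

theorem le_ExB {S : List ℕ} {n m : ℕ} (hfree : FamFree P S) (hn : S.toFinset.card ≤ n)
    (hS : BlockPartition S m) : S.length ≤ ExB P n m :=
  le_csSup (bddAbove_ExB P n m) ⟨S, hfree, hn, hS, rfl⟩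

theorem exists_length_eq_ExB (hnil : FamFree P []) (n m : ℕ) :
    ∃ S : List ℕ, FamFree P S ∧ S.toFinset.card ≤ n ∧ BlockPartition S m ∧
      S.length = ExB P n m :=
  Nat.sSup_mem (s := {L | ∃ S : List ℕ, _}) ⟨0, [], hnil, by simp, ⟨[], by simp, by simp, rfl⟩, rfl⟩
    (bddAbove_ExB P n m)

theorem ExB_mono {n n' m m' : ℕ} (hn : n ≤ n') (hm : m ≤ m') : ExB P n m ≤ ExB P n' m' :=
  csSup_le_csSup' (bddAbove_ExB P n' m') <| by
    rintro _ ⟨S, hfree, hcard, hS, rfl⟩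
    exact ⟨S, hfree, hcard.trans hn, hS.mono hm, rfl⟩

end Extremal

section PermFam

variable {r k : ℕ}

theorem IsPermBlock.mem_iff {π : List ℕ} (hπ : IsPermBlock r π) {c : ℕ} :
    c ∈ π ↔ c ∈ Finset.Icc 1 r := by
  rw [← List.mem_toFinset, hπ.2]

theorem mem_iff_of_mem_permFam {σ : List ℕ} (hk : k ≠ 0) (hσ : σ ∈ PermFam r k) {c : ℕ} :
    c ∈ σ ↔ c ∈ Finset.Icc 1 r := by
  obtain ⟨Bs, hlen, hBs, rfl⟩ := hσ
  obtain ⟨B, hB⟩ : ∃ B, B ∈ Bs := List.exists_mem_of_length_pos (by omega)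
  rw [List.mem_flatten]
  exact ⟨fun ⟨B', hB', hc⟩ => (hBs B' hB').mem_iff.1 hc, fun hc => ⟨B, hB, (hBs B hB).mem_iff.2 hc⟩⟩

theorem append_mem_permFam {σ π : List ℕ} (hσ : σ ∈ PermFam r k) (hπ : IsPermBlock r π) :
    σ ++ π ∈ PermFam r (k + 1) := by
  obtain ⟨Bs, hlen, hBs, rfl⟩ := hσ
  refine ⟨Bs ++ [π], by simp [hlen], ?_, by simp⟩
  simpa only [List.mem_append, List.mem_singleton, or_imp, forall_and, forall_eq] using ⟨hBs, hπ⟩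

theorem perm_append_mem_permFam {σ π : List ℕ} (hπ : IsPermBlock r π) (hσ : σ ∈ PermFam r k) :
    π ++ σ ∈ PermFam r (k + 1) := by
  obtain ⟨Bs, hlen, hBs, rfl⟩ := hσ
  refine ⟨π :: Bs, by simp [hlen], ?_, by simp⟩
  simpa only [List.mem_cons, or_imp, forall_and, forall_eq] using ⟨hπ, hBs⟩

theorem exists_eq_perm_append_of_mem_permFam {σ : List ℕ} (hσ : σ ∈ PermFam r (k + 1)) :
    ∃ π τ, IsPermBlock r π ∧ τ ∈ PermFam r k ∧ σ = π ++ τ := by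
  obtain ⟨_ | ⟨π, Bs⟩, hlen, hBs, rfl⟩ := hσ
  · simp at hlen
  · exact ⟨π, Bs.flatten, hBs π List.mem_cons_self,
      ⟨Bs, by simpa using hlen, fun B hB => hBs B (List.mem_cons_of_mem π hB), rfl⟩, rfl⟩

theorem famFree_nil (hr : 1 ≤ r) (hk : k ≠ 0) : FamFree (PermFam r k) [] := by
  rintro σ hσ ⟨f, -, hsub⟩
  rw [List.sublist_nil, List.map_eq_nil_iff] at hsub
  subst hsub
  simpa using (mem_iff_of_mem_permFam hk hσ (c := 1)).2 (by simp [hr])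

theorem SeqContains.of_append_of_disjoint {σ A B S₁ S₂ : List ℕ} (hσ : σ = A ++ B)
    (hA : ∀ c ∈ σ, c ∈ A) (hB : ∀ c ∈ σ, c ∈ B) (hS : S₁.Disjoint S₂)
    (h : SeqContains σ (S₁ ++ S₂)) : SeqContains σ S₁ ∨ SeqContains σ S₂ := by
  obtain ⟨f, hf, hsub⟩ := h
  obtain ⟨l₁, l₂, hl, hl₁, hl₂⟩ := List.sublist_append_iff.1 hsub
  have hmem : ∀ x ∈ l₁ ++ l₂, ∃ c ∈ σ, f c = x := fun x hx => List.mem_map.1 (hl ▸ hx)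
  rw [hσ, List.map_append] at hl
  rcases List.append_eq_append_iff.1 hl with ⟨l, rfl, hBl⟩ | ⟨l, hAl, rfl⟩
  · suffices l₂ = [] by
      subst this
      exact Or.inl ⟨f, hf, by rwa [hσ, List.map_append, hBl, List.append_nil]⟩
    refine List.eq_nil_iff_forall_not_mem.2 fun x hx => ?_
    obtain ⟨c, hc, rfl⟩ := hmem x (List.mem_append_right _ hx)
    exact hS (hl₁.subset (List.mem_append_left _ (List.mem_map_of_mem (hA c hc)))) (hl₂.subset hx)
  · suffices l₁ = [] by
      subst this
      exact Or.inr ⟨f, hf, by rwa [hσ, List.map_append, hAl, List.nil_append]⟩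
    refine List.eq_nil_iff_forall_not_mem.2 fun x hx => ?_
    obtain ⟨c, hc, rfl⟩ := hmem x (List.mem_append_left _ hx)
    exact hS (hl₁.subset hx) (hl₂.subset (List.mem_append_right _ (List.mem_map_of_mem (hB c hc))))

/-- Every pattern of `Perm_{r,k}`, `k ≥ 2`, splits as a permutation followed by a pattern that
again uses all `r` symbols, so it cannot straddle two alphabets. -/
theorem FamFree.append_of_disjoint (hk : 2 ≤ k) {S₁ S₂ : List ℕ}
    (h₁ : FamFree (PermFam r k) S₁) (h₂ : FamFree (PermFam r k) S₂) (hS : S₁.Disjoint S₂) :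
    FamFree (PermFam r k) (S₁ ++ S₂) := by
  obtain ⟨k, rfl⟩ : ∃ k', k = k' + 1 := ⟨k - 1, by omega⟩
  intro σ hσ hc
  obtain ⟨π, τ, hπ, hτ, hσπτ⟩ := exists_eq_perm_append_of_mem_permFam hσ
  have hσ_iff := fun c => mem_iff_of_mem_permFam (c := c) (by omega) hσ
  rcases hc.of_append_of_disjoint hσπτ
      (fun c hc => hπ.mem_iff.2 ((hσ_iff c).1 hc))
      (fun c hc => (mem_iff_of_mem_permFam (by omega) hτ).2 ((hσ_iff c).1 hc)) hS with h | h
  exacts [h₁ σ hσ h, h₂ σ hσ h]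

theorem ExB_add_le (hr : 1 ≤ r) (hk : 2 ≤ k) (n₁ m₁ n₂ m₂ : ℕ) :
    ExB (PermFam r k) n₁ m₁ + ExB (PermFam r k) n₂ m₂ ≤
      ExB (PermFam r k) (n₁ + n₂) (m₁ + m₂) := by
  have hnil := famFree_nil (r := r) hr (k := k) (by omega)
  obtain ⟨S₁, hfree₁, hcard₁, hS₁, hlen₁⟩ := exists_length_eq_ExB hnil n₁ m₁
  obtain ⟨S₂, hfree₂, hcard₂, hS₂, hlen₂⟩ := exists_length_eq_ExB hnil n₂ m₂
  -- shift the alphabet of `S₂` above every symbol of `S₁`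
  set g : ℕ → ℕ := (· + (S₁.sum + 1))
  have hg : g.Injective := add_left_injective _
  have hdisj : S₁.Disjoint (S₂.map g) := fun a ha hb => by
    obtain ⟨b, -, rfl⟩ := List.mem_map.1 hb
    have := List.le_sum_of_mem ha
    simp only [g] at this
    omega
  have hcard : (S₁ ++ S₂.map g).toFinset.card ≤ n₁ + n₂ := by
    rw [List.toFinset_append]
    refine (Finset.card_union_le _ _).trans (add_le_add hcard₁ ?_)
    rw [← Finset.card_image_of_injective _ hg] at hcard₂
    refine le_trans (Finset.card_le_card fun a ha => ?_) hcard₂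
    simpa using ha
  rw [← hlen₁, ← hlen₂, ← List.length_map (f := g) (as := S₂), ← List.length_append]
  exact le_ExB (hfree₁.append_of_disjoint hk (hfree₂.map hg) hdisj) hcard (hS₁.append (hS₂.map hg))

theorem ExB_sum_le (hr : 1 ≤ r) (hk : 2 ≤ k) {t : ℕ} (n m : Fin t → ℕ) :
    ∑ q, ExB (PermFam r k) (n q) (m q) ≤ ExB (PermFam r k) (∑ q, n q) (∑ q, m q) := by
  induction t with
  | zero => simp
  | succ t ih =>
    simp only [Fin.sum_univ_succ]
    exact (add_le_add le_rfl (ih _ _)).trans (ExB_add_le hr hk _ _ _ _)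

end PermFam

section Reduction

variable {r k : ℕ}

theorem exists_isPermBlock_map_sublist {f : ℕ → ℕ} {W : List ℕ}
    (hf : Set.InjOn f (Finset.Icc 1 r : Set ℕ)) (hW : ∀ c ∈ Finset.Icc 1 r, f c ∈ W) :
    ∃ π, IsPermBlock r π ∧ (π.map f).Sublist W := by
  set E := (Finset.Icc 1 r).image f
  set g := Function.invFunOn f (Finset.Icc 1 r : Set ℕ)
  set R := (W.filter (· ∈ E)).dedup
  have hR : ∀ v, v ∈ R ↔ v ∈ E := fun v => by
    simp only [R, List.mem_dedup, List.mem_filter, decide_eq_true_eq, and_iff_right_iff_imp]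
    intro hv
    obtain ⟨c, hc, rfl⟩ := Finset.mem_image.1 hv
    exact hW c hc
  have hfg : ∀ v ∈ R, f (g v) = v := fun v hv => by
    obtain ⟨c, hc, rfl⟩ := Finset.mem_image.1 ((hR v).1 hv)
    exact Function.invFunOn_eq ⟨c, hc, rfl⟩
  have hmapR : (R.map g).map f = R := by
    rw [List.map_map]
    exact (List.map_congr_left hfg).trans (List.map_id' R)
  refine ⟨R.map g, ⟨List.Nodup.of_map f (by rw [hmapR]; exact List.nodup_dedup _), ?_⟩, ?_⟩
  · ext c
    simp only [List.mem_toFinset, List.mem_map]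
    constructor
    · rintro ⟨v, hv, rfl⟩
      obtain ⟨c, hc, rfl⟩ := Finset.mem_image.1 ((hR v).1 hv)
      exact Function.invFunOn_mem ⟨c, hc, rfl⟩
    · exact fun hc => ⟨f c, (hR _).2 (Finset.mem_image_of_mem f hc), hf.leftInvOn_invFunOn hc⟩
  · rw [hmapR]
    exact (List.dedup_sublist _).trans List.filter_sublist

theorem exists_isPermBlock_of_mem_permFam {σ T W : List ℕ} {f : ℕ → ℕ} (hk : k ≠ 0)
    (hσ : σ ∈ PermFam r k) (hf : ∀ a ∈ σ, ∀ b ∈ σ, f a = f b → a = b)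
    (hsub : (σ.map f).Sublist T) (hTW : ∀ a ∈ T, a ∈ W) :
    ∃ π, IsPermBlock r π ∧ (∀ c ∈ π, c ∈ σ) ∧ (π.map f).Sublist W := by
  have hσ_iff := fun c => mem_iff_of_mem_permFam (c := c) hk hσ
  obtain ⟨π, hπ, hπW⟩ := exists_isPermBlock_map_sublist (r := r) (f := f) (W := W)
    (fun a ha b hb => hf a ((hσ_iff a).2 ha) b ((hσ_iff b).2 hb))
    (fun c hc => hTW _ (hsub.subset (List.mem_map_of_mem ((hσ_iff c).2 hc))))
  exact ⟨π, hπ, fun c hc => (hσ_iff c).2 (hπ.mem_iff.1 hc), hπW⟩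

theorem FamFree.of_append_right (hk : k ≠ 0) {T W : List ℕ}
    (h : FamFree (PermFam r (k + 1)) (T ++ W)) (hTW : ∀ a ∈ T, a ∈ W) :
    FamFree (PermFam r k) T := by
  rintro σ hσ ⟨f, hf, hsub⟩
  obtain ⟨π, hπ, hπσ, hπW⟩ := exists_isPermBlock_of_mem_permFam hk hσ hf hsub hTW
  have hσ' : ∀ c ∈ σ ++ π, c ∈ σ := fun c hc => (List.mem_append.1 hc).elim id (hπσ c)
  refine h _ (append_mem_permFam hσ hπ) ⟨f, fun a ha b hb => hf a (hσ' a ha) b (hσ' b hb), ?_⟩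
  rw [List.map_append]
  exact hsub.append hπW

theorem FamFree.of_append_left (hk : k ≠ 0) {U T : List ℕ}
    (h : FamFree (PermFam r (k + 1)) (U ++ T)) (hTU : ∀ a ∈ T, a ∈ U) :
    FamFree (PermFam r k) T := by
  rintro σ hσ ⟨f, hf, hsub⟩
  obtain ⟨π, hπ, hπσ, hπU⟩ := exists_isPermBlock_of_mem_permFam hk hσ hf hsub hTU
  have hσ' : ∀ c ∈ π ++ σ, c ∈ σ := fun c hc => (List.mem_append.1 hc).elim (hπσ c) id
  refine h _ (perm_append_mem_permFam hπ hσ) ⟨f, fun a ha b hb => hf a (hσ' a ha) b (hσ' b hb), ?_⟩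
  rw [List.map_append]
  exact hπU.append hsub

/-- Filtering `U` down to the symbols of `T` lets both sides be peeled off in turn. -/
theorem FamFree.of_append_append (hk : k ≠ 0) {U T W : List ℕ}
    (h : FamFree (PermFam r (k + 2)) (U ++ T ++ W)) (hTU : ∀ a ∈ T, a ∈ U)
    (hTW : ∀ a ∈ T, a ∈ W) : FamFree (PermFam r k) T := by
  classical
  set U' := U.filter (· ∈ T)
  have h' : FamFree (PermFam r (k + 1 + 1)) (U' ++ T ++ W) :=
    h.sublist ((List.filter_sublist.append (List.Sublist.refl T)).append (List.Sublist.refl W))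
  refine (h'.of_append_right (by omega) fun a ha => ?_).of_append_left hk fun a ha => ?_
  · rcases List.mem_append.1 ha with ha | ha
    · exact hTW a (by simpa [U'] using (List.mem_filter.1 ha).2)
    · exact hTW a ha
  · simpa [U'] using ⟨hTU a ha, ha⟩

end Reduction

section Segments

theorem BlockPartition.filter {S : List ℕ} {m : ℕ} (hS : BlockPartition S m) (p : ℕ → Bool) :
    BlockPartition (S.filter p) m := by
  obtain ⟨Bs, hlen, hnd, rfl⟩ := hS
  refine ⟨Bs.map (List.filter p), by rwa [List.length_map], ?_, List.filter_flatten⟩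
  simpa only [List.mem_map, forall_exists_index, and_imp, forall_apply_eq_imp_iff₂]
    using fun B hB => (hnd B hB).filter p

theorem BlockPartition.exists_eq_append {S : List ℕ} {m₁ m₂ : ℕ}
    (hS : BlockPartition S (m₁ + m₂)) :
    ∃ S₁ S₂, S = S₁ ++ S₂ ∧ BlockPartition S₁ m₁ ∧ BlockPartition S₂ m₂ := by
  obtain ⟨Bs, hlen, hnd, rfl⟩ := hS
  refine ⟨(Bs.take m₁).flatten, (Bs.drop m₁).flatten,
    by rw [← List.flatten_append, List.take_append_drop],
    ⟨_, by simp, fun B hB => hnd B (List.mem_of_mem_take hB), rfl⟩,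
    ⟨_, by simp; omega, fun B hB => hnd B (List.mem_of_mem_drop hB), rfl⟩⟩

theorem BlockPartition.exists_eq_flatten_ofFn {S : List ℕ} {t : ℕ} (mp : Fin t → ℕ)
    (hS : BlockPartition S (∑ q, mp q)) :
    ∃ A : Fin t → List ℕ, S = (List.ofFn A).flatten ∧ ∀ q, BlockPartition (A q) (mp q) := by
  induction t generalizing S with
  | zero =>
    obtain ⟨Bs, hlen, -, rfl⟩ := hS
    obtain rfl : Bs = [] := by simpa using hlen
    exact ⟨Fin.elim0, rfl, fun q => q.elim0⟩
  | succ t ih =>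
    rw [Fin.sum_univ_succ] at hS
    obtain ⟨S₁, S₂, rfl, h₁, h₂⟩ := hS.exists_eq_append
    obtain ⟨A, rfl, hA⟩ := ih _ h₂
    exact ⟨Fin.cons S₁ A, by simp [List.ofFn_succ], Fin.cases h₁ hA⟩

variable {t : ℕ} (A : Fin t → List ℕ)

def segmentsBefore (q : Fin t) : List ℕ := ((List.ofFn A).take q).flatten

def segmentsAfter (q : Fin t) : List ℕ := ((List.ofFn A).drop (q + 1)).flatten

theorem flatten_ofFn_eq_segmentsBefore_append (q : Fin t) :
    (List.ofFn A).flatten = segmentsBefore A q ++ A q ++ segmentsAfter A q := by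
  conv_lhs => rw [← List.take_append_drop q (List.ofFn A), List.drop_eq_getElem_cons (by simp)]
  simp [segmentsBefore, segmentsAfter]

variable {A}

theorem mem_segmentsBefore {a : ℕ} {q : Fin t} :
    a ∈ segmentsBefore A q ↔ ∃ j < q, a ∈ A j := by
  simp only [segmentsBefore, List.mem_flatten, List.mem_take_iff_getElem, List.length_ofFn,
    List.getElem_ofFn]
  constructor
  · rintro ⟨_, ⟨j, hj, rfl⟩, ha⟩
    exact ⟨_, Fin.lt_def.2 (lt_min_iff.1 hj).1, ha⟩
  · rintro ⟨j, hj, ha⟩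
    exact ⟨_, ⟨j, lt_min hj j.2, rfl⟩, ha⟩

theorem mem_segmentsAfter {a : ℕ} {q : Fin t} :
    a ∈ segmentsAfter A q ↔ ∃ j, q < j ∧ a ∈ A j := by
  simp only [segmentsAfter, List.mem_flatten, List.mem_drop_iff_getElem, List.length_ofFn,
    List.getElem_ofFn]
  constructor
  · rintro ⟨_, ⟨j, hj, rfl⟩, ha⟩
    exact ⟨_, Fin.lt_def.2 (by simp only; omega), ha⟩
  · rintro ⟨j, hj, ha⟩
    refine ⟨_, ⟨j - (q + 1), by omega, rfl⟩, ?_⟩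
    convert ha using 3
    rw [Fin.lt_def] at hj
    omega

end Segments

section Parts

theorem List.length_eq_length_filter_and_add {α : Type*} (l : List α) (P Q : α → Prop)
    [DecidablePred P] [DecidablePred Q] :
    l.length = (l.filter fun a => ¬P a ∧ ¬Q a).length + (l.filter fun a => ¬P a ∧ Q a).length +
      (l.filter fun a => P a ∧ ¬Q a).length + (l.filter fun a => P a ∧ Q a).length := by
  induction l with
  | nil => rfl
  | cons a l ih =>
    by_cases hP : P a <;> by_cases hQ : Q a <;> simp [hP, hQ] at ih ⊢ <;> omega

variable {t : ℕ} (A : Fin t → List ℕ)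

def localPart (q : Fin t) : List ℕ :=
  (A q).filter fun a => a ∉ segmentsBefore A q ∧ a ∉ segmentsAfter A q

def firstPart (q : Fin t) : List ℕ :=
  (A q).filter fun a => a ∉ segmentsBefore A q ∧ a ∈ segmentsAfter A q

def lastPart (q : Fin t) : List ℕ :=
  (A q).filter fun a => a ∈ segmentsBefore A q ∧ a ∉ segmentsAfter A q

def middlePart (q : Fin t) : List ℕ :=
  (A q).filter fun a => a ∈ segmentsBefore A q ∧ a ∈ segmentsAfter A q

theorem length_eq_sum_length_parts (q : Fin t) :
    (A q).length = (localPart A q).length + (firstPart A q).length + (lastPart A q).length +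
      (middlePart A q).length :=
  List.length_eq_length_filter_and_add _ _ _

variable {A} {r k : ℕ} {mp : Fin t → ℕ} (hA : ∀ q, BlockPartition (A q) (mp q))
include hA

theorem length_localPart_le (hfree : FamFree (PermFam r k) (List.ofFn A).flatten) (q : Fin t) :
    (localPart A q).length ≤ ExB (PermFam r k) (localPart A q).toFinset.card (mp q) := by
  refine le_ExB (hfree.sublist ?_) le_rfl ((hA q).filter _)
  rw [flatten_ofFn_eq_segmentsBefore_append A q]
  exact (List.filter_sublist.trans (List.sublist_append_right _ _)).trans
    (List.sublist_append_left _ _)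

theorem length_firstPart_le (hk : k ≠ 0) (hfree : FamFree (PermFam r (k + 1)) (List.ofFn A).flatten)
    (q : Fin t) :
    (firstPart A q).length ≤ ExB (PermFam r k) (firstPart A q).toFinset.card (mp q) := by
  refine le_ExB (FamFree.of_append_right (W := segmentsAfter A q) hk (hfree.sublist ?_)
    fun a ha => ?_) le_rfl ((hA q).filter _)
  · rw [flatten_ofFn_eq_segmentsBefore_append A q, List.append_assoc]
    exact (List.filter_sublist.append (List.Sublist.refl _)).trans (List.sublist_append_right _ _)
  · simp only [firstPart, List.mem_filter, decide_eq_true_eq] at ha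
    exact ha.2.2

theorem length_lastPart_le (hk : k ≠ 0) (hfree : FamFree (PermFam r (k + 1)) (List.ofFn A).flatten)
    (q : Fin t) :
    (lastPart A q).length ≤ ExB (PermFam r k) (lastPart A q).toFinset.card (mp q) := by
  refine le_ExB (FamFree.of_append_left (U := segmentsBefore A q) hk (hfree.sublist ?_)
    fun a ha => ?_) le_rfl ((hA q).filter _)
  · rw [flatten_ofFn_eq_segmentsBefore_append A q]
    exact ((List.Sublist.refl _).append List.filter_sublist).trans (List.sublist_append_left _ _)
  · simp only [lastPart, List.mem_filter, decide_eq_true_eq] at ha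
    exact ha.2.1

theorem length_middlePart_le (hk : k ≠ 0)
    (hfree : FamFree (PermFam r (k + 2)) (List.ofFn A).flatten) (q : Fin t) :
    (middlePart A q).length ≤ ExB (PermFam r k) (middlePart A q).toFinset.card (mp q) := by
  refine le_ExB (FamFree.of_append_append (U := segmentsBefore A q) (W := segmentsAfter A q) hk
    (hfree.sublist ?_) (fun a ha => ?_) fun a ha => ?_)
    le_rfl ((hA q).filter _)
  · rw [flatten_ofFn_eq_segmentsBefore_append A q]
    exact ((List.Sublist.refl _).append List.filter_sublist).append (List.Sublist.refl _)
  all_goals simp only [middlePart, List.mem_filter, decide_eq_true_eq] at ha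
  exacts [ha.2.1, ha.2.2]

end Parts

section Counting

variable {t : ℕ} (A : Fin t → List ℕ)

def segmentsOf (a : ℕ) : Finset (Fin t) := Finset.univ.filter fun q => a ∈ A q

def globalSymbols : Finset ℕ :=
  (List.ofFn A).flatten.toFinset.filter fun a => 1 < (segmentsOf A a).card

variable {A}

theorem mem_toFinset_flatten_ofFn {a : ℕ} {q : Fin t} (ha : a ∈ A q) :
    a ∈ (List.ofFn A).flatten.toFinset :=
  List.mem_toFinset.2 (List.mem_flatten.2 ⟨A q, List.mem_ofFn.2 ⟨q, rfl⟩, ha⟩)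

theorem mem_globalSymbols_of_mem {a : ℕ} {i j : Fin t} (hi : a ∈ A i) (hj : a ∈ A j) (hij : i ≠ j) :
    a ∈ globalSymbols A :=
  Finset.mem_filter.2 ⟨mem_toFinset_flatten_ofFn hi,
    Finset.one_lt_card.2 ⟨i, by simpa [segmentsOf], j, by simpa [segmentsOf], hij⟩⟩

theorem card_filter_notMem_segmentsBefore_le_one (a : ℕ) :
    (Finset.univ.filter fun q => a ∈ A q ∧ a ∉ segmentsBefore A q).card ≤ 1 := by
  refine Finset.card_le_one.2 fun i hi j hj => ?_
  simp only [Finset.mem_filter, Finset.mem_univ, true_and, mem_segmentsBefore, not_exists,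
    not_and] at hi hj
  rcases lt_trichotomy i j with h | h | h
  exacts [(hj.2 i h hi.1).elim, h, (hi.2 j h hj.1).elim]

theorem card_filter_notMem_segmentsAfter_le_one (a : ℕ) :
    (Finset.univ.filter fun q => a ∈ A q ∧ a ∉ segmentsAfter A q).card ≤ 1 := by
  refine Finset.card_le_one.2 fun i hi j hj => ?_
  simp only [Finset.mem_filter, Finset.mem_univ, true_and, mem_segmentsAfter, not_exists,
    not_and] at hi hj
  rcases lt_trichotomy i j with h | h | h
  exacts [(hi.2 j h hj.1).elim, h, (hj.2 i h hi.1).elim]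

/-- A global symbol is in the middle of all its segments except the first and the last. -/
theorem card_filter_middle_add_two_le {a : ℕ} (ha : a ∈ globalSymbols A) :
    (Finset.univ.filter fun q => a ∈ A q ∧ a ∈ segmentsBefore A q ∧ a ∈ segmentsAfter A q).card
      + 2 ≤ (segmentsOf A a).card := by
  set Q := segmentsOf A a
  have hQ : 1 < Q.card := (Finset.mem_filter.1 ha).2
  have hne : Q.Nonempty := Finset.card_pos.1 (by omega)
  have hlt := Q.min'_lt_max'_of_card hQ
  have hmem : ∀ {q}, q ∈ Q ↔ a ∈ A q := by simp [Q, segmentsOf]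
  have hsub : (Finset.univ.filter fun q =>
      a ∈ A q ∧ a ∈ segmentsBefore A q ∧ a ∈ segmentsAfter A q) ⊆
      (Q.erase (Q.min' hne)).erase (Q.max' hne) := by
    intro q hq
    simp only [Finset.mem_filter, Finset.mem_univ, true_and, mem_segmentsBefore,
      mem_segmentsAfter] at hq
    obtain ⟨hq, ⟨i, hi, hai⟩, ⟨j, hj, haj⟩⟩ := hq
    refine Finset.mem_erase.2 ⟨?_, Finset.mem_erase.2 ⟨?_, hmem.2 hq⟩⟩
    · exact (hj.trans_le (Q.le_max' j (hmem.2 haj))).ne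
    · exact ((Q.min'_le i (hmem.2 hai)).trans_lt hi).ne'
  have := Finset.card_le_card hsub
  rw [Finset.card_erase_of_mem (Finset.mem_erase.2 ⟨hlt.ne', Q.max'_mem hne⟩),
    Finset.card_erase_of_mem (Q.min'_mem hne)] at this
  omega

theorem sum_card_toFinset_filter_eq {X : Finset ℕ} (p : Fin t → ℕ → Prop)
    [∀ q, DecidablePred (p q)] (hX : ∀ q, ∀ a ∈ A q, p q a → a ∈ X) :
    ∑ q, ((A q).filter (p q ·)).toFinset.card =
      ∑ a ∈ X, (Finset.univ.filter fun q => a ∈ A q ∧ p q a).card := by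
  have h : ∀ q, ((A q).filter (p q ·)).toFinset = X.filter fun a => a ∈ A q ∧ p q a :=
    fun q => by
      ext a
      simp only [List.mem_toFinset, List.mem_filter, decide_eq_true_eq, Finset.mem_filter]
      exact ⟨fun h => ⟨hX q a h.1 h.2, h⟩, fun h => h.2⟩
  simp only [h]
  exact Finset.sum_card_bipartiteAbove_eq_sum_card_bipartiteBelow (fun q a => a ∈ A q ∧ p q a)

theorem sum_card_localPart_add_card_globalSymbols_le :
    ∑ q, (localPart A q).toFinset.card + (globalSymbols A).card ≤
      (List.ofFn A).flatten.toFinset.card := by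
  set T := (List.ofFn A).flatten.toFinset
  have hX : ∀ q, ∀ a ∈ A q, a ∉ segmentsBefore A q ∧ a ∉ segmentsAfter A q →
      a ∈ T \ globalSymbols A := fun q a ha hloc => by
    refine Finset.mem_sdiff.2 ⟨mem_toFinset_flatten_ofFn ha, fun hG => ?_⟩
    obtain ⟨j, hj, hjq⟩ := Finset.exists_mem_ne (Finset.mem_filter.1 hG).2 q
    have haj : a ∈ A j := by simpa [segmentsOf] using hj
    rcases hjq.lt_or_gt with h | h
    exacts [hloc.1 (mem_segmentsBefore.2 ⟨j, h, haj⟩), hloc.2 (mem_segmentsAfter.2 ⟨j, h, haj⟩)]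
  have hle : ∀ a ∈ T \ globalSymbols A, (Finset.univ.filter fun q =>
      a ∈ A q ∧ a ∉ segmentsBefore A q ∧ a ∉ segmentsAfter A q).card ≤ 1 := fun a _ =>
    (Finset.card_le_card (Finset.monotone_filter_right _ fun _ _ => And.imp_right And.left)).trans
      (card_filter_notMem_segmentsBefore_le_one (A := A) a)
  have hsum := (sum_card_toFinset_filter_eq _ hX).trans_le (Finset.sum_le_card_nsmul _ _ 1 hle)
  have hT : (T \ globalSymbols A).card + (globalSymbols A).card = T.card :=
    Finset.card_sdiff_add_card_eq_card (Finset.filter_subset _ T)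
  rw [smul_eq_mul, mul_one] at hsum
  unfold localPart
  omega

theorem sum_card_firstPart_le : ∑ q, (firstPart A q).toFinset.card ≤ (globalSymbols A).card := by
  have hX : ∀ q, ∀ a ∈ A q, a ∉ segmentsBefore A q ∧ a ∈ segmentsAfter A q →
      a ∈ globalSymbols A := fun q a ha h => by
    obtain ⟨j, hj, haj⟩ := mem_segmentsAfter.1 h.2
    exact mem_globalSymbols_of_mem ha haj hj.ne
  have hle : ∀ a ∈ globalSymbols A, (Finset.univ.filter fun q =>
      a ∈ A q ∧ a ∉ segmentsBefore A q ∧ a ∈ segmentsAfter A q).card ≤ 1 := fun a _ =>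
    (Finset.card_le_card (Finset.monotone_filter_right _ fun _ _ => And.imp_right And.left)).trans
      (card_filter_notMem_segmentsBefore_le_one (A := A) a)
  have := Finset.sum_le_card_nsmul _ _ 1 hle
  rw [smul_eq_mul, mul_one] at this
  exact (sum_card_toFinset_filter_eq _ hX).trans_le this

theorem sum_card_lastPart_le : ∑ q, (lastPart A q).toFinset.card ≤ (globalSymbols A).card := by
  have hX : ∀ q, ∀ a ∈ A q, a ∈ segmentsBefore A q ∧ a ∉ segmentsAfter A q →
      a ∈ globalSymbols A := fun q a ha h => by
    obtain ⟨j, hj, haj⟩ := mem_segmentsBefore.1 h.1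
    exact mem_globalSymbols_of_mem ha haj hj.ne'
  have hle : ∀ a ∈ globalSymbols A, (Finset.univ.filter fun q =>
      a ∈ A q ∧ a ∈ segmentsBefore A q ∧ a ∉ segmentsAfter A q).card ≤ 1 := fun a _ =>
    (Finset.card_le_card (Finset.monotone_filter_right _ fun _ _ =>
      And.imp_right And.right)).trans (card_filter_notMem_segmentsAfter_le_one (A := A) a)
  have := Finset.sum_le_card_nsmul _ _ 1 hle
  rw [smul_eq_mul, mul_one] at this
  exact (sum_card_toFinset_filter_eq _ hX).trans_le this

theorem sum_card_middlePart_add_two_mul_le :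
    ∑ q, (middlePart A q).toFinset.card + 2 * (globalSymbols A).card ≤
      ∑ q, ((A q).filter (· ∈ globalSymbols A)).toFinset.card := by
  have hX : ∀ q, ∀ a ∈ A q, a ∈ segmentsBefore A q ∧ a ∈ segmentsAfter A q →
      a ∈ globalSymbols A := fun q a ha h => by
    obtain ⟨j, hj, haj⟩ := mem_segmentsAfter.1 h.2
    exact mem_globalSymbols_of_mem ha haj hj.ne
  rw [show ∑ q, (middlePart A q).toFinset.card = _ from sum_card_toFinset_filter_eq _ hX,
    sum_card_toFinset_filter_eq (fun _ a => a ∈ globalSymbols A) fun _ _ _ h => h,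
    mul_comm, ← smul_eq_mul, ← Finset.sum_const, ← Finset.sum_add_distrib]
  refine Finset.sum_le_sum fun a ha => ?_
  have hseg : (Finset.univ.filter fun q => a ∈ A q ∧ a ∈ globalSymbols A) = segmentsOf A a := by
    simp [segmentsOf, ha]
  exact hseg ▸ card_filter_middle_add_two_le ha

theorem List.Sublist.flatten_ofFn {α : Type*} {n : ℕ} {B C : Fin n → List α}
    (h : ∀ q, (B q).Sublist (C q)) : (List.ofFn B).flatten.Sublist (List.ofFn C).flatten := by
  induction n with
  | zero => simp
  | succ n ih =>
    simp only [List.ofFn_succ, List.flatten_cons]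
    exact (h 0).append (ih fun q => h q.succ)

theorem sum_card_toFinset_filter_le_ExB {P : Set (List ℕ)}
    (hfree : FamFree P (List.ofFn A).flatten) (G : Finset ℕ) :
    ∑ q, ((A q).filter (· ∈ G)).toFinset.card ≤ ExB P G.card t := by
  set C := (List.ofFn fun q => ((A q).filter (· ∈ G)).dedup).flatten
  have hC : C.length = ∑ q, ((A q).filter (· ∈ G)).toFinset.card := by
    simp only [C, List.length_flatten, List.map_ofFn, List.sum_ofFn, Function.comp_def,
      List.card_toFinset]
  rw [← hC]
  refine le_ExB (hfree.sublist ?_) (Finset.card_le_card fun a ha => ?_)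
    ⟨_, by simp, by simp [List.nodup_dedup], rfl⟩
  · exact List.Sublist.flatten_ofFn fun q => (List.dedup_sublist _).trans List.filter_sublist
  · simp only [C, List.mem_toFinset, List.mem_flatten, List.mem_ofFn] at ha
    obtain ⟨_, ⟨q, rfl⟩, ha⟩ := ha
    simpa using (List.mem_filter.1 (List.mem_dedup.1 ha)).2

end Counting

section Recurrence

variable {t r k : ℕ} {A : Fin t → List ℕ} {mp : Fin t → ℕ}

theorem sum_le_PERMB_of_le (hr : 1 ≤ r) (hk : k ≠ 0) {L c : Fin t → ℕ} {N : ℕ}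
    (hL : ∀ q, L q ≤ PERMB r k (c q) (mp q)) (hc : ∑ q, c q ≤ N) :
    ∑ q, L q ≤ PERMB r k N (∑ q, mp q) :=
  (Finset.sum_le_sum fun q _ => hL q).trans
    ((ExB_sum_le hr (by omega) c mp).trans (ExB_mono hc le_rfl))

theorem length_flatten_ofFn_eq_sum_parts :
    (List.ofFn A).flatten.length = ∑ q, (localPart A q).length + ∑ q, (firstPart A q).length +
      ∑ q, (lastPart A q).length + ∑ q, (middlePart A q).length := by
  rw [List.length_flatten, List.map_ofFn, List.sum_ofFn]
  simp only [Function.comp_apply, ← Finset.sum_add_distrib]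
  exact Finset.sum_congr rfl fun q _ => length_eq_sum_length_parts A q

variable (hr : 1 ≤ r) (hk : k ≠ 0) (hA : ∀ q, BlockPartition (A q) (mp q))
  (hfree : FamFree (PermFam r (k + 3)) (List.ofFn A).flatten)
include hr hk hA hfree

theorem length_le_of_segments :
    (List.ofFn A).flatten.length ≤ ∑ q, PERMB r (k + 2) (localPart A q).toFinset.card (mp q)
      + 2 * PERMB r (k + 1) (globalSymbols A).card (∑ q, mp q)
      + PERMB r k (PERMB r (k + 2) (globalSymbols A).card t - 2 * (globalSymbols A).card)
          (∑ q, mp q) := by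
  have hlocal : ∑ q, (localPart A q).length ≤
      ∑ q, PERMB r (k + 2) (localPart A q).toFinset.card (mp q) :=
    Finset.sum_le_sum fun q _ => length_localPart_le hA hfree q
  have hfirst := sum_le_PERMB_of_le hr (k := k + 1) (by omega)
    (fun q => length_firstPart_le hA (by omega) hfree q) sum_card_firstPart_le
  have hlast := sum_le_PERMB_of_le hr (k := k + 1) (by omega)
    (fun q => length_lastPart_le hA (by omega) hfree q) sum_card_lastPart_le
  have hmiddle := sum_le_PERMB_of_le hr hk
    (fun q => length_middlePart_le hA (k := k + 1) (by omega) hfree q)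
    (N := PERMB r (k + 2) (globalSymbols A).card t - 2 * (globalSymbols A).card) <| by
      have : _ ≤ PERMB r (k + 2) _ t := sum_card_toFinset_filter_le_ExB hfree (globalSymbols A)
      have := sum_card_middlePart_add_two_mul_le (A := A)
      omega
  rw [length_flatten_ofFn_eq_sum_parts]
  omega

end Recurrence

/-- With two segments every global symbol is first in segment `0` and last in segment `1`. -/
theorem length_le_of_two_segments {r k : ℕ} {A : Fin 2 → List ℕ} {mp : Fin 2 → ℕ}
    (hr : 1 ≤ r) (hA : ∀ q, BlockPartition (A q) (mp q))
    (hfree : FamFree (PermFam r (k + 3)) (List.ofFn A).flatten) :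
    (List.ofFn A).flatten.length ≤ ∑ q, PERMB r (k + 2) (localPart A q).toFinset.card (mp q)
      + PERMB r (k + 1) (2 * (globalSymbols A).card) (∑ q, mp q) := by
  have hbefore : segmentsBefore A 0 = [] := rfl
  have hafter : segmentsAfter A 1 = [] := rfl
  have hfirst : firstPart A 1 = [] := by simp [firstPart, hafter]
  have hlast : lastPart A 0 = [] := by simp [lastPart, hbefore]
  have hmiddle : ∀ q, middlePart A q = [] := by
    intro q; fin_cases q <;> simp [middlePart, hbefore, hafter]
  have hlocal : ∑ q, (localPart A q).length ≤
      ∑ q, PERMB r (k + 2) (localPart A q).toFinset.card (mp q) :=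
    Finset.sum_le_sum fun q _ => length_localPart_le hA hfree q
  have hsegment : ∀ q, (firstPart A q).length + (lastPart A q).length ≤
      PERMB r (k + 1) ((firstPart A q).toFinset.card + (lastPart A q).toFinset.card) (mp q) := by
    refine Fin.forall_fin_two.2 ⟨?_, ?_⟩
    · simp only [hlast, List.length_nil, List.toFinset_nil, Finset.card_empty, add_zero]
      exact length_firstPart_le hA (by omega) hfree 0
    · simp only [hfirst, List.length_nil, List.toFinset_nil, Finset.card_empty, zero_add]
      exact length_lastPart_le hA (by omega) hfree 1
  have hcard : ∑ q, ((firstPart A q).toFinset.card + (lastPart A q).toFinset.card) ≤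
      2 * (globalSymbols A).card := by
    rw [Finset.sum_add_distrib]
    linarith [sum_card_firstPart_le (A := A), sum_card_lastPart_le (A := A)]
  have hglobal := sum_le_PERMB_of_le hr (by omega) hsegment hcard
  rw [length_flatten_ofFn_eq_sum_parts]
  simp only [hmiddle, List.length_nil, Finset.sum_const_zero, Finset.sum_add_distrib] at hglobal ⊢
  omega

theorem exists_le_sum_eq {t : ℕ} [NeZero t] (a : Fin t → ℕ) {n : ℕ} (h : ∑ q, a q ≤ n) :
    ∃ b : Fin t → ℕ, (∀ q, a q ≤ b q) ∧ ∑ q, b q = n :=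
  ⟨a + Pi.single 0 (n - ∑ q, a q), fun q => Nat.le_add_right _ _, by
    simp only [Pi.add_apply, Finset.sum_add_distrib, Finset.sum_pi_single', Finset.mem_univ,
      if_true]
    omega⟩

/-- The recurrence for `PERM_{r,s}(n,m)` over uniform interval
partitions: for any partition of the `m` blocks into `m̂` intervals of positive sizes
there is a local/global alphabet partition satisfying the stated inequalities. -/
theorem PERM_recurrence :
    ∀ r s n m : ℕ, 2 ≤ r → 3 ≤ s → 1 ≤ n → 1 ≤ m →
      ∀ mhat : ℕ, 2 ≤ mhat → ∀ mp : Fin mhat → ℕ,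
        (∀ q, 1 ≤ mp q) → (∑ q, mp q) = m →
        ∃ (nhat : ℕ) (np : Fin mhat → ℕ),
          nhat + ∑ q, np q = n ∧
          (mhat = 2 →
            PERMB r s n m ≤ (∑ q, PERMB r s (np q) (mp q))
              + PERMB r (s - 1) (2 * nhat) m) ∧
          (2 < mhat →
            PERMB r s n m ≤ (∑ q, PERMB r s (np q) (mp q))
              + 2 * PERMB r (s - 1) nhat m
              + PERMB r (s - 2) (PERMB r s nhat mhat - 2 * nhat) m) := by
  intro r s n m hr hs _ _ mhat hmhat mp _ hmp
  obtain ⟨k, rfl⟩ : ∃ k, s = k + 2 := ⟨s - 2, by omega⟩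
  have hk : k ≠ 0 := by omega
  have hr : 1 ≤ r := by omega
  obtain ⟨S, hfree, hcard, hS, hlen⟩ :=
    exists_length_eq_ExB (famFree_nil hr (k := k + 3) (by omega)) n m
  subst hmp
  obtain ⟨A, rfl, hA⟩ := hS.exists_eq_flatten_ofFn mp
  have : NeZero mhat := ⟨by omega⟩
  have hcount := sum_card_localPart_add_card_globalSymbols_le (A := A)
  obtain ⟨np, hnp, hnp_sum⟩ := exists_le_sum_eq (fun q => (localPart A q).toFinset.card)
    (n := n - (globalSymbols A).card) (by omega)
  have hlocal : ∑ q, PERMB r (k + 2) (localPart A q).toFinset.card (mp q) ≤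
      ∑ q, PERMB r (k + 2) (np q) (mp q) :=
    Finset.sum_le_sum fun q _ => ExB_mono (hnp q) le_rfl
  have hlen' : PERMB r (k + 2) n (∑ q, mp q) = (List.ofFn A).flatten.length := hlen.symm
  rw [show k + 2 - 1 = k + 1 by omega, show k + 2 - 2 = k by omega]
  refine ⟨(globalSymbols A).card, np, by omega, fun h2 => ?_, fun _ => ?_⟩
  · subst h2
    have := length_le_of_two_segments hr hA hfree
    omega
  · have := length_le_of_segments hr hk hA hfree
    omega
end

section
/- The coefficients K_{s,i} and dblK_{s,i} satisfy, with t = ⌊(s−2)/2⌋: (i) K_{3,i} = 2i+2 and K_{4,i} = 10·2^i − 4(i+2) for all i ≥ 1; (ii) for every r ≥ 2, dblK_{3,i} ≤ 6·C(i+1,2) + 4·6^{r−1}·(i+1) and dblK_{4,i} ≤ 20·(6^{r−1}+2)·2^i; (iii) there exists a constant C (depending on s and r) such that K_{5,i}, dblK_{5,i} ≤ 2^i·(i+C)!; (iv) for every even s ≥ 4 there exists a constant C with K_{s,i}, dblK_{s,i} ≤ 2^{C(i+C, t)}; (v) for every odd s ≥ 5 there exists a constant C with K_{s,i}, dblK_{s,i}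 ≤ 2^{C(i+C, t)·(log₂(i+1)+C)}. Here C(a,b) denotes the binomial coefficient. -/
/-- The coefficients `K_{s,i}` (for `i ≥ 1`; the value at `i = 0` is set to that at `i = 1`). -/
def Kc : ℕ → ℕ → ℕ
  | 0, _ => 1
  | 1, _ => 1
  | 2, _ => 2
  | s+3, 0 => 2 ^ (s+2)
  | s+3, 1 => 2 ^ (s+2)
  | s+3, i+2 => 2 * Kc (s+2) (i+2) + Kc (s+1) (i+2) * (Kc (s+3) (i+1) - 2)
  termination_by s i => (s, i)

/-- The coefficients `dblK_{s,i}` (for `i ≥ 1`; the value at `i = 0` is set to that at `i = 1`). -/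
def dblKc (r : ℕ) : ℕ → ℕ → ℕ
  | 0, _ => 1
  | 1, _ => 1
  | 2, _ => 2 * 6 ^ (r-1)
  | s+3, 0 => 2 * dblKc r (s+2) 0 + 1
  | s+3, 1 => 2 * dblKc r (s+2) 1 + 1
  | s+3, i+2 => dblKc r (s+3) (i+1) + 2 * dblKc r (s+2) (i+2)
      + (dblKc r (s+1) (i+2) + 2) * Kc (s+3) (i+1)
  termination_by s i => (s, i)

/-- The multiplicities `μ_{s,i}`: `μ_{2,i} = 2`, `μ_{3,i} = i+1`, `μ_{s,0} = 1` for `s ≥ 4`,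
and `μ_{s,i} = μ_{s,i-1} ⬝ μ_{s-2,i}` for `s ≥ 4`, `i ≥ 1`. -/
def muC : ℕ → ℕ → ℕ
  | 0, _ => 1
  | 1, _ => 1
  | 2, _ => 2
  | 3, i => i + 1
  | s+4, 0 => 1
  | s+4, i+1 => muC (s+4) i * muC (s+2) (i+1)
  termination_by s i => (s, i)

open scoped Nat

lemma two_pow_add_two_pow_le {a b c : ℕ} (ha : a < c) (hb : b < c) : 2 ^ a + 2 ^ b ≤ 2 ^ c := by
  obtain ⟨c, rfl⟩ := Nat.exists_eq_add_of_lt ha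
  have h₁ := Nat.pow_le_pow_right two_pos (show a ≤ a + c by omega)
  have h₂ := Nat.pow_le_pow_right two_pos (show b ≤ a + c by omega)
  rw [pow_succ]
  omega

lemma Nat.choose_add_le_choose_add {n t : ℕ} (ht : 1 ≤ t) (htn : t ≤ n + 1) (d : ℕ) :
    n.choose t + d ≤ (n + d).choose t := by
  obtain ⟨u, rfl⟩ := Nat.exists_eq_add_of_le' ht
  induction d with
  | zero => rfl
  | succ d ih =>
    have := Nat.choose_pos (show u ≤ n + d by omega)
    rw [show n + (d + 1) = n + d + 1 from rfl, Nat.choose_succ_succ']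
    omega

lemma sq_le_two_pow_add_two (n : ℕ) : n ^ 2 ≤ 2 ^ (n + 2) := by
  induction n with
  | zero => norm_num
  | succ n ih =>
    have := Nat.lt_two_pow_self (n := n + 2)
    rw [pow_succ 2 (n + 2)]
    nlinarith

lemma mul_log_two_le (k n : ℕ) : k * Nat.log 2 n ≤ n + 4 * k ^ 2 := by
  set L := Nat.log 2 n
  rcases le_or_gt L (4 * k) with hL | hL
  · nlinarith
  · have hn : n ≠ 0 := fun h => by simp [L, h] at hL
    have h₁ := Nat.pow_log_le_self 2 hn
    have h₂ := sq_le_two_pow_add_two L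
    rw [pow_add] at h₂
    nlinarith

lemma choose_mul_log_add_two_le {t c C : ℕ} (hC : (t + 1) * (c + 3) + 4 * (t + 1) ^ 2 ≤ C)
    (i : ℕ) : (i + c).choose t * (Nat.log 2 (i + 1) + c) + 2 ≤ (i + C).choose (t + 1) := by
  have hC' : t + c + 3 ≤ C := by nlinarith
  obtain ⟨m, hm⟩ : ∃ m, i + C = m + 1 := ⟨i + C - 1, by omega⟩
  set L := Nat.log 2 (i + 1)
  have hmul := Nat.add_one_mul_choose_eq m t
  have hle : (i + c).choose t ≤ m.choose t := Nat.choose_le_choose t (by omega)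
  have hpos : 1 ≤ m.choose t := Nat.choose_pos (by omega)
  have hlog := mul_log_two_le (t + 1) (i + 1)
  have hfactor : (L + c + 2) * (t + 1) ≤ m + 1 := by nlinarith
  rw [hm]
  refine Nat.le_of_mul_le_mul_right ?_ (Nat.succ_pos t)
  calc ((i + c).choose t * (L + c) + 2) * (t + 1)
      ≤ m.choose t * ((L + c + 2) * (t + 1)) := by
        have := Nat.mul_le_mul_right (L + c) hle
        nlinarith
    _ ≤ m.choose t * (m + 1) := Nat.mul_le_mul_left _ hfactor
    _ = (m + 1).choose (t + 1) * (t + 1) := by rw [mul_comm, hmul]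

lemma two_pow_mul_factorial_le (i c : ℕ) :
    2 ^ i * (i + c)! ≤ 2 ^ ((i + (c + 2)) * (Nat.log 2 (i + 1) + (c + 2))) := by
  set L := Nat.log 2 (i + 1)
  have hi : i + 1 < 2 ^ (L + 1) := Nat.lt_pow_succ_log_self one_lt_two _
  have hc : c + 1 ≤ 2 ^ c := Nat.lt_two_pow_self
  have hbase : i + c ≤ 2 ^ (L + 1 + c) := by
    rw [pow_add]; nlinarith
  calc 2 ^ i * (i + c)! ≤ 2 ^ i * (2 ^ (L + 1 + c)) ^ (i + c) := by
        gcongr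
        exact (Nat.factorial_le_pow _).trans (Nat.pow_le_pow_left hbase _)
    _ = 2 ^ (i + (L + 1 + c) * (i + c)) := by rw [← pow_mul, ← pow_add]
    _ ≤ 2 ^ ((i + (c + 2)) * (L + (c + 2))) := Nat.pow_le_pow_right two_pos (by nlinarith)

lemma natCast_le_two_rpow_of_le_two_pow {K b C i : ℕ}
    (h : K ≤ 2 ^ (b * (Nat.log 2 (i + 1) + C))) :
    (K : ℝ) ≤ (2 : ℝ) ^ ((b : ℝ) * (Real.logb 2 ((i : ℝ) + 1) + (C : ℝ))) := by
  have hlog : (Nat.log 2 (i + 1) : ℝ) ≤ Real.logb 2 ((i : ℝ) + 1) := by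
    exact_mod_cast Real.natLog_le_logb (i + 1) 2
  calc (K : ℝ) ≤ (2 : ℝ) ^ ((b * (Nat.log 2 (i + 1) + C) : ℕ) : ℝ) := by
        rw [Real.rpow_natCast]; exact_mod_cast h
    _ ≤ _ := by
        apply Real.rpow_le_rpow_of_exponent_le one_le_two
        push_cast
        gcongr

lemma le_two_pow_mul_factorial {x : ℕ → ℕ} {c : ℕ} (h₁ : x 1 ≤ 2 * (1 + c)!)
    (hstep : ∀ i, 1 ≤ i → x (i + 1) ≤ x i + 2 ^ i * (i + 1 + c)!) :
    ∀ i, 1 ≤ i → x i ≤ 2 ^ i * (i + c)! := by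
  intro i hi
  induction i, hi using Nat.le_induction with
  | base => simpa using h₁
  | succ i hi ih =>
    have := Nat.factorial_le (Nat.le_add_right (i + c) 1)
    calc x (i + 1) ≤ 2 ^ i * (i + c)! + 2 ^ i * (i + 1 + c)! := (hstep i hi).trans (by gcongr)
      _ ≤ 2 ^ (i + 1) * (i + 1 + c)! := by
        rw [pow_succ, show i + 1 + c = i + c + 1 by omega]
        nlinarith [Nat.mul_le_mul_left (2 ^ i) this]

lemma factorial_mul_le_factorial {n m : ℕ} (h : n + 3 ≤ m) :
    n ! * ((n + 1) * (n + 2) * m) ≤ m ! := by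
  obtain ⟨k, rfl⟩ := Nat.exists_eq_add_of_le h
  have h₁ : (n + 2)! ≤ (n + 2 + k)! := Nat.factorial_le (by omega)
  calc n ! * ((n + 1) * (n + 2) * (n + 3 + k)) = (n + 3 + k) * (n + 2)! := by
        rw [Nat.factorial_succ (n + 1), Nat.factorial_succ n]; ring
    _ ≤ (n + 3 + k) * (n + 2 + k)! := by gcongr
    _ = (n + 3 + k)! := by rw [show n + 3 + k = n + 2 + k + 1 by omega, Nat.factorial_succ]

lemma Kc_add_one_of_le_one (s : ℕ) {i : ℕ} (hi : i ≤ 1) : Kc (s + 1) i = 2 ^ s := by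
  match s, i, hi with
  | 0, _, _ => rw [Kc]; rfl
  | 1, _, _ => rw [Kc]; rfl
  | s + 2, 0, _ => rw [Kc]
  | s + 2, 1, _ => rw [Kc]

lemma Kc_one_left (i : ℕ) : Kc 1 i = 1 := by rw [Kc]

lemma Kc_two_left (i : ℕ) : Kc 2 i = 2 := by rw [Kc]

lemma Kc_add_three_succ (s : ℕ) {i : ℕ} (hi : 1 ≤ i) :
    Kc (s + 3) (i + 1) = 2 * Kc (s + 2) (i + 1) + Kc (s + 1) (i + 1) * (Kc (s + 3) i - 2) := by
  obtain ⟨j, rfl⟩ := Nat.exists_eq_add_of_le' hi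
  rw [Kc]

theorem Kc_three {i : ℕ} (hi : 1 ≤ i) : Kc 3 i = 2 * i + 2 := by
  induction i, hi using Nat.le_induction with
  | base => rw [Kc_add_one_of_le_one 2 le_rfl]; rfl
  | succ i hi ih => rw [Kc_add_three_succ 0 hi, Kc_two_left, Kc_one_left, ih]; omega

theorem Kc_four_add {i : ℕ} (hi : 1 ≤ i) : Kc 4 i + 4 * (i + 2) = 10 * 2 ^ i := by
  induction i, hi using Nat.le_induction with
  | base => rw [Kc_add_one_of_le_one 3 le_rfl]; rfl
  | succ i hi ih =>
    have := Nat.lt_two_pow_self (n := i)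
    rw [Kc_add_three_succ 1 hi, Kc_two_left, Kc_three (by omega), pow_succ]
    simp only [Nat.reduceAdd]
    omega

lemma three_mul_add_one_mul_add_two_le {i : ℕ} (hi : 1 ≤ i) :
    3 * (i + 1) * (i + 2) ≤ 10 * 2 ^ i := by
  induction i, hi using Nat.le_induction with
  | base => norm_num
  | succ i hi ih => rw [pow_succ]; nlinarith

theorem Kc_five_le {i : ℕ} (hi : 1 ≤ i) : Kc 5 i ≤ 2 ^ i * (i + 4)! := by
  induction i, hi using Nat.le_induction with
  | base => rw [Kc_add_one_of_le_one 4 le_rfl]; decide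
  | succ i hi ih =>
    have h4 := Kc_four_add (i := i + 1) (by omega)
    have hfact : 24 ≤ (i + 4)! := Nat.factorial_le (m := 4) (by omega)
    rw [Kc_add_three_succ 2 hi, Kc_three (by omega), show i + 1 + 4 = (i + 4) + 1 by omega,
      Nat.factorial_succ]
    calc 2 * Kc 4 (i + 1) + (2 * (i + 1) + 2) * (Kc 5 i - 2)
        ≤ 2 * (10 * 2 ^ (i + 1)) + (2 * i + 4) * (2 ^ i * (i + 4)!) :=
          Nat.add_le_add (by omega) (Nat.mul_le_mul (by omega) ((Nat.sub_le _ _).trans ih))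
      _ = 2 ^ i * (40 + (2 * i + 4) * (i + 4)!) := by ring
      _ ≤ 2 ^ i * ((2 * i + 10) * (i + 4)!) := by
          gcongr; nlinarith
      _ = 2 ^ (i + 1) * ((i + 4 + 1) * (i + 4)!) := by ring

section dblKc

variable (r : ℕ)

lemma dblKc_one_left (i : ℕ) : dblKc r 1 i = 1 := by rw [dblKc]

lemma dblKc_two_left (i : ℕ) : dblKc r 2 i = 2 * 6 ^ (r - 1) := by rw [dblKc]

lemma dblKc_add_three_of_le_one (s : ℕ) {i : ℕ} (hi : i ≤ 1) :
    dblKc r (s + 3) i = 2 * dblKc r (s + 2) i + 1 := by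
  interval_cases i <;> rw [dblKc]

lemma dblKc_add_three_succ (s : ℕ) {i : ℕ} (hi : 1 ≤ i) :
    dblKc r (s + 3) (i + 1) = dblKc r (s + 3) i + 2 * dblKc r (s + 2) (i + 1)
      + (dblKc r (s + 1) (i + 1) + 2) * Kc (s + 3) i := by
  obtain ⟨j, rfl⟩ := Nat.exists_eq_add_of_le' hi
  rw [dblKc]

lemma Kc_add_three_le_dblKc_of_le_one (s : ℕ) {i : ℕ} (hi : i ≤ 1)
    (h : Kc (s + 2) i ≤ dblKc r (s + 2) i) : Kc (s + 3) i ≤ dblKc r (s + 3) i := by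
  rw [Kc_add_one_of_le_one (s + 1) hi] at h
  rw [Kc_add_one_of_le_one (s + 2) hi, dblKc_add_three_of_le_one r s hi, pow_succ]
  omega

theorem Kc_le_dblKc : ∀ s i, Kc s i ≤ dblKc r s i
  | 0, i => by rw [Kc, dblKc]
  | 1, i => by rw [Kc_one_left, dblKc_one_left]
  | 2, i => by
    rw [Kc_two_left, dblKc_two_left]
    have := Nat.one_le_pow (r - 1) 6 (by norm_num)
    omega
  | s + 3, 0 => Kc_add_three_le_dblKc_of_le_one r s (by omega) (Kc_le_dblKc (s + 2) 0)
  | s + 3, 1 => Kc_add_three_le_dblKc_of_le_one r s le_rfl (Kc_le_dblKc (s + 2) 1)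
  | s + 3, i + 2 => by
    rw [Kc_add_three_succ s (i := i + 1) (by omega),
      dblKc_add_three_succ r s (i := i + 1) (by omega)]
    have h₁ := Kc_le_dblKc (s + 2) (i + 2)
    have h₂ := Kc_le_dblKc (s + 1) (i + 2)
    have h₃ := Nat.mul_le_mul h₂ (Nat.sub_le (Kc (s + 3) (i + 1)) 2)
    nlinarith

theorem dblKc_three_add {i : ℕ} (hi : 1 ≤ i) :
    dblKc r 3 i + 5 = 3 * i * (i + 1) + 4 * 6 ^ (r - 1) * i := by
  induction i, hi using Nat.le_induction with
  | base => rw [dblKc_add_three_of_le_one r 0 le_rfl, dblKc_two_left]; ring_nf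
  | succ i hi ih =>
    rw [dblKc_add_three_succ r 0 hi, dblKc_two_left, dblKc_one_left, Kc_three hi]
    nlinarith

theorem dblKc_four_le {i : ℕ} (hi : 1 ≤ i) : dblKc r 4 i ≤ 20 * (6 ^ (r - 1) + 2) * 2 ^ i := by
  induction i, hi using Nat.le_induction with
  | base =>
    rw [dblKc_add_three_of_le_one r 1 le_rfl, dblKc_add_three_of_le_one r 0 le_rfl,
      dblKc_two_left]
    omega
  | succ i hi ih =>
    have h3 := dblKc_three_add r (i := i + 1) (by omega)
    have h4 := Kc_four_add hi
    have hq := three_mul_add_one_mul_add_two_le hi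
    rw [dblKc_add_three_succ r 1 hi, dblKc_two_left, pow_succ]
    simp only [Nat.reduceAdd]
    nlinarith

theorem dblKc_five_le {i : ℕ} (hi : 1 ≤ i) :
    dblKc r 5 i ≤ 2 ^ i * (i + 80 * (6 ^ (r - 1) + 2))! := by
  refine le_two_pow_mul_factorial ?_ (fun i hi => ?_) i hi
  · rw [dblKc_add_three_of_le_one r 2 le_rfl, dblKc_add_three_of_le_one r 1 le_rfl,
      dblKc_add_three_of_le_one r 0 le_rfl, dblKc_two_left]
    have := Nat.self_le_factorial (1 + 80 * (6 ^ (r - 1) + 2))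
    omega
  · have h3 := dblKc_three_add r (i := i + 1) (by omega)
    have h4 := dblKc_four_le r (i := i + 1) (by omega)
    have h5 := Kc_five_le hi
    rw [dblKc_add_three_succ r 2 hi]
    simp only [Nat.reduceAdd] at *
    generalize 6 ^ (r - 1) = A at *
    have hfact := factorial_mul_le_factorial (n := i + 4) (m := i + 1 + 80 * (A + 2)) (by omega)
    have hpoly : 80 * (A + 2) + (3 * (i + 1) * (i + 2) + 4 * A * (i + 1))
        ≤ (i + 5) * (i + 6) * (i + 1 + 80 * (A + 2)) := by
      have : i + 2 ≤ (i + 5) * (i + 6) := by nlinarith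
      nlinarith [Nat.mul_le_mul_left (80 * (A + 2)) this]
    have hD3 : dblKc r 3 (i + 1) + 2 ≤ 3 * (i + 1) * (i + 2) + 4 * A * (i + 1) := by linarith
    calc dblKc r 5 i + 2 * dblKc r 4 (i + 1) + (dblKc r 3 (i + 1) + 2) * Kc 5 i
        ≤ dblKc r 5 i + 2 * (20 * (A + 2) * 2 ^ (i + 1))
          + (3 * (i + 1) * (i + 2) + 4 * A * (i + 1)) * (2 ^ i * (i + 4)!) := by gcongr
      _ = dblKc r 5 i + 2 ^ i * (80 * (A + 2)
          + (3 * (i + 1) * (i + 2) + 4 * A * (i + 1)) * (i + 4)!) := by ring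
      _ ≤ dblKc r 5 i + 2 ^ i * ((80 * (A + 2)
          + (3 * (i + 1) * (i + 2) + 4 * A * (i + 1))) * (i + 4)!) := by
          have := Nat.factorial_pos (i + 4)
          gcongr; nlinarith
      _ ≤ dblKc r 5 i + 2 ^ i * (i + 1 + 80 * (A + 2))! := by
          gcongr
          exact (Nat.mul_le_mul_right _ hpoly).trans ((Nat.mul_comm _ _).trans_le hfact)

def DblKcLeTwoPow (s : ℕ) (E : ℕ → ℕ) : Prop := ∀ i, 1 ≤ i → dblKc r s i ≤ 2 ^ E i

def evenExponent (t C i : ℕ) : ℕ := (i + C).choose t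

def oddExponent (t C i : ℕ) : ℕ := (i + C).choose t * (Nat.log 2 (i + 1) + C)

variable {r}

theorem DblKcLeTwoPow.add_three {s : ℕ} {α β E : ℕ → ℕ} (hα : DblKcLeTwoPow r (s + 1) α)
    (hβ : DblKcLeTwoPow r (s + 2) β) (hβE : ∀ i, 1 ≤ i → β i + 2 ≤ E i)
    (hαE : ∀ i, 1 ≤ i → α (i + 1) + E i + 3 ≤ E (i + 1)) : DblKcLeTwoPow r (s + 3) E := by
  intro i hi
  induction i, hi using Nat.le_induction with
  | base =>
    have h := hβ 1 le_rfl
    have hE := Nat.pow_le_pow_right two_pos (hβE 1 le_rfl)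
    have := Nat.one_le_two_pow (n := β 1)
    rw [pow_add] at hE
    rw [dblKc_add_three_of_le_one r s le_rfl]
    omega
  | succ i hi ih =>
    have hK := (Kc_le_dblKc r (s + 3) i).trans ih
    have hα' := hα (i + 1) (by omega)
    have hβ' := hβ (i + 1) (by omega)
    have := Nat.one_le_two_pow (n := α (i + 1))
    rw [dblKc_add_three_succ r s hi]
    calc dblKc r (s + 3) i + 2 * dblKc r (s + 2) (i + 1)
          + (dblKc r (s + 1) (i + 1) + 2) * Kc (s + 3) i
        ≤ 2 ^ E i + 2 * 2 ^ β (i + 1) + (2 ^ α (i + 1) + 2) * 2 ^ E i := by gcongr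
      _ ≤ 4 * (2 ^ α (i + 1) * 2 ^ E i) + 2 * 2 ^ β (i + 1) := by nlinarith
      _ = 2 ^ (α (i + 1) + E i + 2) + 2 ^ (β (i + 1) + 1) := by ring
      _ ≤ 2 ^ E (i + 1) :=
        two_pow_add_two_pow_le (by linarith [hαE i hi]) (by linarith [hβE (i + 1) (by omega)])

theorem dblKcLeTwoPow_four : DblKcLeTwoPow r 4 (evenExponent 1 (20 * (6 ^ (r - 1) + 2))) := by
  intro i hi
  have hc := Nat.lt_two_pow_self (n := 20 * (6 ^ (r - 1) + 2))
  calc dblKc r 4 i ≤ 20 * (6 ^ (r - 1) + 2) * 2 ^ i := dblKc_four_le r hi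
    _ ≤ 2 ^ (20 * (6 ^ (r - 1) + 2)) * 2 ^ i := by gcongr
    _ = 2 ^ evenExponent 1 (20 * (6 ^ (r - 1) + 2)) i := by
      rw [evenExponent, Nat.choose_one_right, ← pow_add, add_comm]

theorem dblKcLeTwoPow_five : DblKcLeTwoPow r 5 (oddExponent 1 (80 * (6 ^ (r - 1) + 2) + 2)) := by
  intro i hi
  rw [oddExponent, Nat.choose_one_right]
  exact (dblKc_five_le r hi).trans (two_pow_mul_factorial_le i _)

theorem DblKcLeTwoPow.even_succ {t Ce Co : ℕ} (ht : 1 ≤ t)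
    (he : DblKcLeTwoPow r (2 * t + 2) (evenExponent t Ce))
    (ho : DblKcLeTwoPow r (2 * t + 3) (oddExponent t Co)) :
    DblKcLeTwoPow r (2 * (t + 1) + 2)
      (evenExponent (t + 1) (Ce + 4 + (t + 1) * (Co + 3) + 4 * (t + 1) ^ 2)) := by
  set C := Ce + 4 + (t + 1) * (Co + 3) + 4 * (t + 1) ^ 2 with hC
  have hCe : t + Ce + 6 ≤ C := by nlinarith
  refine DblKcLeTwoPow.add_three (s := 2 * t + 1) he ho (fun i _ => ?_) (fun i _ => ?_)
  · exact choose_mul_log_add_two_le (by omega) i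
  · have h₁ := Nat.choose_le_choose t (show i + 1 + Ce ≤ i + C - 3 by omega)
    have h₂ := Nat.choose_add_le_choose_add ht (show t ≤ i + C - 3 + 1 by omega) 3
    rw [show i + C - 3 + 3 = i + C by omega] at h₂
    simp only [evenExponent, show i + 1 + C = i + C + 1 by omega, Nat.choose_succ_succ']
    omega

theorem DblKcLeTwoPow.odd_succ {t Ce Co : ℕ}
    (ho : DblKcLeTwoPow r (2 * t + 3) (oddExponent t Co))
    (he : DblKcLeTwoPow r (2 * (t + 1) + 2) (evenExponent (t + 1) Ce)) :
    DblKcLeTwoPow r (2 * (t + 1) + 3) (oddExponent (t + 1) (Ce + Co + t + 3)) := by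
  set C := Ce + Co + t + 3 with hC
  refine DblKcLeTwoPow.add_three (s := 2 * t + 2) ho he (fun i _ => ?_) (fun i _ => ?_)
  · have h₁ := Nat.choose_le_choose (t + 1) (show i + Ce ≤ i + C by omega)
    have h₂ := Nat.choose_pos (show t + 1 ≤ i + C by omega)
    have h₃ := Nat.mul_le_mul_left ((i + C).choose (t + 1))
      (show 3 ≤ Nat.log 2 (i + 1) + C by omega)
    simp only [evenExponent, oddExponent]
    omega
  · have h₁ := Nat.choose_le_choose t (show i + 1 + Co ≤ i + C by omega)
    have h₂ := Nat.choose_pos (show t ≤ i + C by omega)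
    have hlog : Nat.log 2 (i + 1) ≤ Nat.log 2 (i + 1 + 1) := Nat.log_mono_right (by omega)
    have h₃ := Nat.mul_le_mul_right (Nat.log 2 (i + 1 + 1) + Co) h₁
    have h₄ := Nat.mul_le_mul_left ((i + C).choose t)
      (show Nat.log 2 (i + 1 + 1) + Co + 3 ≤ Nat.log 2 (i + 1 + 1) + C by omega)
    have h₅ := Nat.mul_le_mul_left ((i + C).choose (t + 1))
      (show Nat.log 2 (i + 1) + C ≤ Nat.log 2 (i + 1 + 1) + C by omega)
    simp only [oddExponent, show i + 1 + C = i + C + 1 by omega, Nat.choose_succ_succ']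
    nlinarith

theorem exists_dblKcLeTwoPow {t : ℕ} (ht : 1 ≤ t) :
    ∃ Ce Co, DblKcLeTwoPow r (2 * t + 2) (evenExponent t Ce) ∧
      DblKcLeTwoPow r (2 * t + 3) (oddExponent t Co) := by
  induction t, ht using Nat.le_induction with
  | base => exact ⟨_, _, dblKcLeTwoPow_four, dblKcLeTwoPow_five⟩
  | succ t ht ih =>
    obtain ⟨Ce, Co, he, ho⟩ := ih
    have he' := he.even_succ ht ho
    exact ⟨_, _, he', ho.odd_succ he'⟩

end dblKc

/-- Closed-form bounds on the coefficients `K_{s,i}` and `dblK_{s,i}`. -/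
theorem K_dblK_closed_form :
    (∀ i : ℕ, 1 ≤ i → Kc 3 i = 2 * i + 2 ∧ Kc 4 i = 10 * 2 ^ i - 4 * (i + 2)) ∧
    (∀ r : ℕ, 2 ≤ r → ∀ i : ℕ, 1 ≤ i →
      dblKc r 3 i ≤ 6 * (i + 1).choose 2 + 4 * 6 ^ (r - 1) * (i + 1) ∧
      dblKc r 4 i ≤ 20 * (6 ^ (r - 1) + 2) * 2 ^ i) ∧
    (∀ r : ℕ, 2 ≤ r → ∃ C : ℕ, ∀ i : ℕ, 1 ≤ i →
      Kc 5 i ≤ 2 ^ i * Nat.factorial (i + C) ∧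
      dblKc r 5 i ≤ 2 ^ i * Nat.factorial (i + C)) ∧
    (∀ s : ℕ, 4 ≤ s → Even s → ∀ r : ℕ, 2 ≤ r → ∃ C : ℕ, ∀ i : ℕ, 1 ≤ i →
      Kc s i ≤ 2 ^ ((i + C).choose ((s - 2) / 2)) ∧
      dblKc r s i ≤ 2 ^ ((i + C).choose ((s - 2) / 2))) ∧
    (∀ s : ℕ, 5 ≤ s → Odd s → ∀ r : ℕ, 2 ≤ r → ∃ C : ℕ, ∀ i : ℕ, 1 ≤ i →
      (Kc s i : ℝ) ≤ (2 : ℝ) ^ (((i + C).choose ((s - 2) / 2) : ℝ) *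
        (Real.logb 2 ((i : ℝ) + 1) + (C : ℝ))) ∧
      (dblKc r s i : ℝ) ≤ (2 : ℝ) ^ (((i + C).choose ((s - 2) / 2) : ℝ) *
        (Real.logb 2 ((i : ℝ) + 1) + (C : ℝ)))) := by
  refine ⟨fun i hi => ⟨Kc_three hi, by have := Kc_four_add hi; omega⟩,
    fun r _ i hi => ⟨?_, dblKc_four_le r hi⟩, fun r _ => ?_, fun s hs hse r _ => ?_,
    fun s hs hso r _ => ?_⟩
  · have h3 := dblKc_three_add r hi
    have h2 : (i + 1) * i = (i + 1).choose 2 * 2 := Nat.add_one_mul_choose_eq i 1 ▸ by simp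
    generalize 6 ^ (r - 1) = A at *
    nlinarith
  · exact ⟨_, fun i hi => ⟨(Kc_le_dblKc r 5 i).trans (dblKc_five_le r hi), dblKc_five_le r hi⟩⟩
  · obtain ⟨t, rfl⟩ : ∃ t, s = 2 * t + 2 := by obtain ⟨m, rfl⟩ := hse; exact ⟨m - 1, by omega⟩
    obtain ⟨C, -, he, -⟩ := exists_dblKcLeTwoPow (r := r) (t := t) (by omega)
    refine ⟨C, fun i hi => ?_⟩
    rw [show (2 * t + 2 - 2) / 2 = t by omega]
    exact ⟨(Kc_le_dblKc r _ i).trans (he i hi), he i hi⟩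
  · obtain ⟨t, rfl⟩ : ∃ t, s = 2 * t + 3 := by obtain ⟨m, rfl⟩ := hso; exact ⟨m - 1, by omega⟩
    obtain ⟨-, C, -, ho⟩ := exists_dblKcLeTwoPow (r := r) (t := t) (by omega)
    refine ⟨C, fun i hi => ?_⟩
    rw [show (2 * t + 3 - 2) / 2 = t by omega]
    exact ⟨natCast_le_two_rpow_of_le_two_pow ((Kc_le_dblKc r _ i).trans (ho i hi)),
      natCast_le_two_rpow_of_le_two_pow (ho i hi)⟩
end

section
/- The multiplicities μ_{s,i} satisfy the following closed forms. (i) For every even s ≥ 2, with t = (s−2)/2, and every i ≥ 1: μ_{s,i} = 2^{C(i+t−1, t)}. (ii) For every odd s ≥ 5, with t = (s−3)/2, and every i ≥ 0: μ_{s,i} = ∏_{l=0}^{i} (i+1−l)^{C(l+t−1, t−1)}; in particular μ_{5,i} = (i+1)!. Here C(a,b) denotes the binomial coefficient. -/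
lemma muC_zero' (s : ℕ) : muC (s+4) 0 = 1 := by simp [muC]
lemma muC_succ' (s i : ℕ) : muC (s+4) (i+1) = muC (s+4) i * muC (s+2) (i+1) := by rw [muC]
lemma muC_two' (i : ℕ) : muC 2 i = 2 := by simp [muC]
lemma muC_three' (i : ℕ) : muC 3 i = i + 1 := by simp [muC]

lemma muC_even' : ∀ t j : ℕ, muC (2*t+2) (j+1) = 2 ^ ((j + t).choose t) := by
  intro t
  induction t with
  | zero => intro j; simp [muC_two']
  | succ t ih =>
    intro j
    induction j with
    | zero =>
      rw [show 2*(t+1)+2 = 2*t+4 by ring, muC_succ', muC_zero', one_mul, ih 0]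
      simp
    | succ j hj =>
      rw [show 2*(t+1)+2 = 2*t+4 by ring] at hj ⊢
      rw [muC_succ', hj, ih (j+1), ← pow_add]
      congr 1
      rw [show j+1+(t+1) = (j+t+1)+1 by ring, Nat.choose_succ_succ,
          show j+(t+1) = j+t+1 by ring, show j+1+t = j+t+1 by ring]
      ring

lemma prod_step' (t i : ℕ) :
    (∏ l ∈ Finset.range (i+1), (i+1-l) ^ ((l+(t+1)).choose (t+1))) *
      (∏ l ∈ Finset.range (i+2), (i+2-l) ^ ((l+t).choose t)) =
    ∏ l ∈ Finset.range (i+2), (i+2-l) ^ ((l+(t+1)).choose (t+1)) := by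
  have key : ∀ l : ℕ, (i+2-(l+1)) ^ ((l+1+(t+1)).choose (t+1))
      = (i+1-l) ^ ((l+(t+1)).choose (t+1)) * (i+1-l) ^ ((l+1+t).choose t) := by
    intro l
    have h1 : i+2-(l+1) = i+1-l := by omega
    have h2 : (l+1+(t+1)).choose (t+1) = (l+(t+1)).choose (t+1) + (l+1+t).choose t := by
      rw [show l+1+(t+1) = (l+t+1)+1 by ring, Nat.choose_succ_succ,
          show l+(t+1) = l+t+1 by ring, show l+1+t = l+t+1 by ring]
      ring
    rw [h1, h2, pow_add]
  rw [Finset.prod_range_succ' (fun l => (i+2-l) ^ ((l+(t+1)).choose (t+1))),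
      Finset.prod_range_succ' (fun l => (i+2-l) ^ ((l+t).choose t))]
  simp only [key, Finset.prod_mul_distrib]
  simp [Nat.choose_self]
  ring

lemma muC_odd' : ∀ t i : ℕ, muC (2*t+5) i
    = ∏ l ∈ Finset.range (i+1), (i+1-l) ^ ((l+t).choose t) := by
  intro t
  induction t with
  | zero =>
    intro i
    induction i with
    | zero => simp [muC]
    | succ i ihc =>
      rw [show 2*0+5 = 1+4 by ring] at ihc ⊢
      rw [muC_succ', ihc, muC_three']
      simp only [Nat.add_zero, Nat.choose_zero_right, pow_one]
      rw [Finset.prod_range_succ' (fun l => (i+2) - l)]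
      simp only [Nat.succ_sub_succ_eq_sub, Nat.sub_zero]
  | succ t ih =>
    intro i
    induction i with
    | zero =>
      rw [show 2*(t+1)+5 = (2*t+3)+4 by ring, muC_zero']
      simp
    | succ i ihc =>
      rw [show 2*(t+1)+5 = (2*t+3)+4 by ring] at ihc ⊢
      rw [muC_succ', ihc, show (2*t+3)+2 = 2*t+5 by ring, ih (i+1)]
      exact prod_step' t i

lemma muC_five' (i : ℕ) : muC 5 i = Nat.factorial (i+1) := by
  induction i with
  | zero => simp [muC]
  | succ i ih =>
    rw [show (5:ℕ) = 1+4 from rfl] at ih ⊢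
    rw [muC_succ', ih, muC_three', Nat.factorial_succ (i+1)]
    ring

/-- Closed forms for the multiplicities `μ_{s,i}`. -/
theorem mu_closed_form :
    (∀ s : ℕ, 2 ≤ s → Even s → ∀ i : ℕ, 1 ≤ i →
      muC s i = 2 ^ ((i + (s - 2) / 2 - 1).choose ((s - 2) / 2))) ∧
    (∀ s : ℕ, 5 ≤ s → Odd s → ∀ i : ℕ,
      muC s i = ∏ l ∈ Finset.range (i + 1),
        (i + 1 - l) ^ ((l + (s - 3) / 2 - 1).choose ((s - 3) / 2 - 1))) ∧
    (∀ i : ℕ, muC 5 i = Nat.factorial (i + 1)) := by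
  refine ⟨?_, ?_, muC_five'⟩
  · intro s hs hev i hi
    obtain ⟨k, hk⟩ := hev
    obtain ⟨t, rfl⟩ : ∃ t, s = 2*t+2 := ⟨k-1, by omega⟩
    obtain ⟨j, rfl⟩ : ∃ j, i = j+1 := ⟨i-1, by omega⟩
    rw [show (2*t+2-2)/2 = t by omega, show j+1+t-1 = j+t by omega]
    exact muC_even' t j
  · intro s hs hodd i
    obtain ⟨k, hk⟩ := hodd
    obtain ⟨t, rfl⟩ : ∃ t, s = 2*t+5 := ⟨k-2, by omega⟩
    rw [show (2*t+5-3)/2 = t+1 by omega]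
    have e : ∀ l : ℕ, l + (t+1) - 1 = l + t := fun l => by omega
    simp only [e, Nat.add_sub_cancel]
    exact muC_odd' t i
end
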